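/- A subset A of X_G is scattered if and only if A contains no piece-wise shifted FP-set. -/

import Mathlib

open Set

/-- A coarse structure on a set `X`. -/
structure CoarseStructure (X : Type*) where
  sets : Set (Set (X × X))
  diagonal_mem : ∀ E ∈ sets, ∀ x : X, (x, x) ∈ E
  comp_mem : ∀ E ∈ sets, ∀ E' ∈ sets,
    {q : X × X | ∃ z : X, (q.1, z) ∈ E ∧ (z, q.2) ∈ E'} ∈ sets
  inv_mem : ∀ E ∈ sets, {q : X × X | (q.2, q.1) ∈ E} ∈ sets
  subset_mem : ∀ E ∈ sets, ∀ E', E' ⊆ E → (∀ x : X, (x, x) ∈ E') → E' ∈ sets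
  covers : ⋃₀ sets = Set.univ

/-- The ball `E[A]`. -/
def ball {X : Type*} (E : Set (X × X)) (A : Set X) : Set X := {y | ∃ a ∈ A, (a, y) ∈ E}

/-- A bounded subset of a coarse space. -/
def CoarseStructure.Bounded {X : Type*} (C : CoarseStructure X) (B : Set X) : Prop :=
  ∃ E ∈ C.sets, ∃ x : X, B ⊆ ball E {x}

/-- A finitary coarse space: uniformly finite balls. -/
def CoarseStructure.Finitary {X : Type*} (C : CoarseStructure X) : Prop :=
  ∀ E ∈ C.sets, ∃ n : ℕ, ∀ x : X, (ball E {x}).Finite ∧ (ball E {x}).ncard < n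

/-- The set `X^♯` of ultrafilters all of whose members are unbounded. -/
def CoarseStructure.Sharp {X : Type*} (C : CoarseStructure X) : Set (Ultrafilter X) :=
  {p | ∀ P ∈ p, ¬ C.Bounded P}

/-- The parallelity relation on ultrafilters. -/
def CoarseStructure.Parallel {X : Type*} (C : CoarseStructure X) (p q : Ultrafilter X) : Prop :=
  ∃ E ∈ C.sets, ∀ P ∈ p, ball E P ∈ q

/-- The entourage determined by a set of permutations. -/
def entourage {X : Type*} (F : Set (Equiv.Perm X)) : Set (X × X) :=
  {q | ∃ g ∈ F, q.2 = g q.1}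

/-- The finitary coarse structure `X_G` determined by a group `G` of permutations of `X`:
its entourages are the diagonal-containing subsets of `{(x,gx) : x ∈ X, g ∈ F}`
for finite `F ⊆ G` with `id ∈ F`. -/
def XGsets {X : Type*} (G : Subgroup (Equiv.Perm X)) : Set (Set (X × X)) :=
  {E | (∀ x : X, (x, x) ∈ E) ∧ ∃ F : Finset (Equiv.Perm X),
    (1 : Equiv.Perm X) ∈ F ∧ ↑F ⊆ (G : Set (Equiv.Perm X)) ∧ E ⊆ entourage ↑F}

/-- A free ultrafilter. -/
def IsFree {X : Type*} (p : Ultrafilter X) : Prop := (p : Filter X) ≤ Filter.cofinite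

/-- `X*`, the space of free ultrafilters with the Stone topology. -/
def FreeUF (X : Type*) : Type _ := {p : Ultrafilter X // IsFree p}

instance (X : Type*) : TopologicalSpace (FreeUF X) :=
  instTopologicalSpaceSubtype

/-- The orbit `Gp` of an ultrafilter under the induced action `gp = {gP : P ∈ p}`. -/
def ufOrbit {X : Type*} (G : Subgroup (Equiv.Perm X)) (p : Ultrafilter X) :
    Set (Ultrafilter X) :=
  {q | ∃ g ∈ G, q = Ultrafilter.map (⇑g) p}

/-- The `p`-companion `Δ_p(A) = A* ∩ Gp`. -/
def compan {X : Type*} (G : Subgroup (Equiv.Perm X)) (p : Ultrafilter X) (A : Set X) :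
    Set (Ultrafilter X) :=
  {q | A ∈ q ∧ q ∈ ufOrbit G p}

/-- Large subsets of `X_G`. -/
def IsLarge {X : Type*} (G : Subgroup (Equiv.Perm X)) (A : Set X) : Prop :=
  ∃ E ∈ XGsets G, ball E A = Set.univ

/-- Thick subsets of `X_G`. -/
def IsThick {X : Type*} (G : Subgroup (Equiv.Perm X)) (A : Set X) : Prop :=
  ∀ E ∈ XGsets G, ∃ a ∈ A, ball E {a} ⊆ A

/-- Thin (discrete) subsets of `X_G`. -/
def IsThin {X : Type*} (G : Subgroup (Equiv.Perm X)) (A : Set X) : Prop :=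
  ∀ E ∈ XGsets G, ∃ B : Set X, B.Finite ∧ ∀ a ∈ A \ B, ball E {a} ∩ A = {a}

/-- Sparse subsets of `X_G`. -/
def IsSparse {X : Type*} (G : Subgroup (Equiv.Perm X)) (A : Set X) : Prop :=
  ∀ p : Ultrafilter X, IsFree p → (compan G p A).Finite

/-- Scattered subsets of `X_G`. -/
def IsScattered {X : Type*} (G : Subgroup (Equiv.Perm X)) (A : Set X) : Prop :=
  ∀ Y ⊆ A, Y.Infinite →
    ∃ p : Ultrafilter X, IsFree p ∧ Y ∈ p ∧ (compan G p Y).Finite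

/-- Close subsets of a coarse space. -/
def CoarseStructure.Close {X : Type*} (C : CoarseStructure X) (A B : Set X) : Prop :=
  ∃ E ∈ C.sets, A ⊆ ball E B ∧ B ⊆ ball E A

/-- Close subsets of `X_G`. -/
def CloseG {X : Type*} (G : Subgroup (Equiv.Perm X)) (A B : Set X) : Prop :=
  ∃ E ∈ XGsets G, A ⊆ ball E B ∧ B ⊆ ball E A

/-- Linked subsets of `X_G`. -/
def LinkedG {X : Type*} (G : Subgroup (Equiv.Perm X)) (A B : Set X) : Prop :=
  (A.Finite ∧ B.Finite) ∨
    ∃ A' ⊆ A, ∃ B' ⊆ B, A'.Infinite ∧ B'.Infinite ∧ CloseG G A' B'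


open Set

/-- The `n`-th block `{g_0^{ε_0} ⋯ g_n^{ε_n} x_n : ε_i ∈ {0,1}}`. -/
def pwBlock {X : Type*} (g : ℕ → Equiv.Perm X) (x : ℕ → X) (n : ℕ) : Set X :=
  {y | ∃ ε : Fin (n + 1) → Bool,
    y = ((List.ofFn fun i : Fin (n + 1) =>
      (g i) ^ (if ε i then 1 else 0)).prod : Equiv.Perm X) (x n)}

/-- A piece-wise shifted FP-set determined by the group `G`. -/
def IsPWShiftedFP {X : Type*} (G : Subgroup (Equiv.Perm X)) (Y : Set X) : Prop :=
  ∃ g : ℕ → Equiv.Perm X, ∃ x : ℕ → X,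
    (∀ n, g n ∈ G) ∧
    (∀ m n, m ≠ n → Disjoint (pwBlock g x m) (pwBlock g x n)) ∧
    (∀ n, (pwBlock g x n).ncard = 2 ^ (n + 1)) ∧
    Y = ⋃ n, pwBlock g x n

/-- The group of all self-homeomorphisms of a topological space, as a subgroup
of the permutation group. -/
def homeoSubgroup (X : Type*) [TopologicalSpace X] : Subgroup (Equiv.Perm X) where
  carrier := {g | Continuous g ∧ Continuous g.symm}
  one_mem' := ⟨continuous_id, continuous_id⟩
  mul_mem' := by
    rintro a b ⟨ha1, ha2⟩ ⟨hb1, hb2⟩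
    refine ⟨?_, ?_⟩
    · simpa [Equiv.Perm.mul_def, Equiv.coe_trans] using ha1.comp hb1
    · simpa [Equiv.Perm.mul_def, Equiv.symm_trans_apply] using (hb2.comp ha2 : _)
  inv_mem' := by
    rintro a ⟨ha1, ha2⟩
    exact ⟨ha2, by first | exact ha1 | simpa [Equiv.Perm.inv_def] using ha1⟩


/-- The parallelity relation on ultrafilters over the coarse space `X_G`. -/
def ParallelG {X : Type*} (G : Subgroup (Equiv.Perm X)) (p q : Ultrafilter X) : Prop :=
  ∃ E ∈ XGsets G, ∀ P ∈ p, ball E P ∈ q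

/-- Linked subsets of a coarse space. -/
def CoarseStructure.Linked {X : Type*} (C : CoarseStructure X) (A B : Set X) : Prop :=
  (C.Bounded A ∧ C.Bounded B) ∨
    ∃ A' ⊆ A, ∃ B' ⊆ B, ¬ C.Bounded A' ∧ ¬ C.Bounded B' ∧ C.Close A' B'

/-- The orbit `Gp` viewed as a subset of the space `X*` of free ultrafilters. -/
def freeOrbit {X : Type*} (G : Subgroup (Equiv.Perm X)) (p : Ultrafilter X) :
    Set (FreeUF X) :=
  {q | q.1 ∈ ufOrbit G p}


/-!
If `Y` is a piece-wise shifted FP-set and `p` is a free ultrafilter containing `Y`, then for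
every `m` the blocks of index `≥ m` split into `2 ^ m` pieces according to the first `m`
exponents. One piece lies in `p`, and left multiplication by
`g₀^β₀ ⋯ g_{m-1}^β_{m-1} (g₀^α₀ ⋯ g_{m-1}^α_{m-1})⁻¹` carries it into every other piece, so
`Y* ∩ Gp` has at least `2 ^ m` elements.

Conversely, suppose every free `p ∋ Y` has infinite companion `Y* ∩ Gp`. By Zorn's lemma in the
compact space `βX` there is a minimal nonempty closed `K ⊆ Y* ∩ X*` containing the companions of
its points. By minimality `K` is the closure of the companion of each of its points, so an
accumulation point `q` of the infinite set `K` accumulates `Y* ∩ Gq`: every member of `q` lies in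
infinitely many `gq`. This lets one choose `g_n` inductively so that the points whose cube
`{g₀^ε₀ ⋯ g_{n-1}^ε_{n-1} z}` consists of `2 ^ n` distinct points of `Y` stay in `q`, and then
choose centres `x_n` with pairwise disjoint cubes.
-/

open Filter Topology Function

theorem exists_seq_of_forall_exists_update {α : Type*} (P : ℕ → (ℕ → α) → Prop)
    (hP : ∀ n f f', (∀ i < n, f i = f' i) → P n f → P n f') {f₀ : ℕ → α} (h₀ : P 0 f₀)
    (step : ∀ n f, P n f → ∃ a, P (n + 1) (Function.update f n a)) : ∃ f, ∀ n, P n f := by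
  choose next hnext using step
  let s : (n : ℕ) → {f // P n f} :=
    fun n => Nat.rec ⟨f₀, h₀⟩ (fun n f => ⟨_, hnext n f.1 f.2⟩) n
  refine ⟨fun n => (s (n + 1)).1 n, fun n => hP n _ _ ?_ (s n).2⟩
  induction n with
  | zero => exact fun i hi => absurd hi (Nat.not_lt_zero i)
  | succ n ih =>
    intro i hi
    rcases Nat.lt_succ_iff_lt_or_eq.1 hi with hi | rfl
    · exact (Function.update_of_ne hi.ne _ _).trans (ih i hi)
    · rfl

theorem AccPt.of_closure {α : Type*} [TopologicalSpace α] [T1Space α] {x : α} {C : Set α}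
    (h : AccPt x (𝓟 (closure C))) : AccPt x (𝓟 C) := by
  rw [accPt_iff_nhds] at h ⊢
  intro U hU
  obtain ⟨V, hVU, hVo, hxV⟩ := mem_nhds_iff.1 hU
  obtain ⟨y, ⟨hyV, hyC⟩, hyx⟩ := h V (hVo.mem_nhds hxV)
  obtain ⟨z, hz, hzC⟩ :=
    mem_closure_iff.1 hyC (V ∩ {x}ᶜ) (hVo.inter isOpen_compl_singleton) ⟨hyV, hyx⟩
  exact ⟨z, ⟨hVU hz.1, hzC⟩, hz.2⟩

theorem exists_minimal_isClosed_invariant {α : Type*} [TopologicalSpace α] [CompactSpace α]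
    (T : α → Set α) {S : Set α} (hS : IsClosed S) (hne : S.Nonempty) (hT : ∀ a ∈ S, T a ⊆ S) :
    ∃ K ⊆ S, Minimal (fun K => K.Nonempty ∧ IsClosed K ∧ ∀ a ∈ K, T a ⊆ K) K := by
  refine zorn_superset_nonempty _ (fun c hc hchain hcne => ?_) S ⟨hne, hS, hT⟩
  have : Nonempty c := hcne.to_subtype
  refine ⟨⋂₀ c, ⟨?_, isClosed_sInter fun K hK => (hc hK).2.1, ?_⟩,
    fun K hK => sInter_subset_of_mem hK⟩
  · have hdir : DirectedOn (· ⊇ ·) c := fun a ha b hb =>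
      (hchain.total ha hb).elim (fun hab => ⟨a, ha, subset_rfl, hab⟩)
        fun hba => ⟨b, hb, hba, subset_rfl⟩
    exact IsCompact.nonempty_sInter_of_directed_nonempty_isCompact_isClosed hdir
      (fun K hK => (hc hK).1) (fun K hK => (hc hK).2.1.isCompact) (fun K hK => (hc hK).2.1)
  · exact fun a ha => subset_sInter fun K hK => (hc hK).2.2 a (ha K hK)

theorem Ultrafilter.continuous_map {α β : Type*} (f : α → β) : Continuous (Ultrafilter.map f) :=
  ultrafilterBasis_is_basis.continuous_iff.2 <| by
    rintro _ ⟨S, rfl⟩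
    exact ultrafilter_isOpen_basic (f ⁻¹' S)

theorem Ultrafilter.eventually_ne_of_map_ne {α β : Type*} {q : Ultrafilter α} {f f' : α → β}
    (h : q.map f ≠ q.map f') : ∀ᶠ x in q, f x ≠ f' x :=
  Ultrafilter.eventually_not.2 fun he => h (Ultrafilter.coe_injective (Filter.map_congr he))

section FreeUltrafilter

variable {X : Type*}

theorem IsFree.notMem_of_finite {p : Ultrafilter X} (hp : IsFree p) {S : Set X}
    (hS : S.Finite) : S ∉ p :=
  Ultrafilter.compl_mem_iff_notMem.mp (hp hS.compl_mem_cofinite)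

theorem IsFree.infinite_of_mem {p : Ultrafilter X} (hp : IsFree p) {S : Set X} (hS : S ∈ p) :
    S.Infinite :=
  fun hfin => hp.notMem_of_finite hfin hS

theorem exists_isFree_mem_of_infinite {S : Set X} (hS : S.Infinite) :
    ∃ p : Ultrafilter X, IsFree p ∧ S ∈ p :=
  haveI := hS.cofinite_inf_principal_neBot
  ⟨.of (Filter.cofinite ⊓ 𝓟 S), (Ultrafilter.of_le _).trans inf_le_left,
    (Ultrafilter.of_le _).trans inf_le_right (Filter.mem_principal_self S)⟩

theorem IsFree.map {p : Ultrafilter X} (hp : IsFree p) (g : Equiv.Perm X) :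
    IsFree (p.map g) :=
  (Filter.map_mono hp).trans g.injective.tendsto_cofinite

theorem isClosed_setOf_isFree : IsClosed {p : Ultrafilter X | IsFree p} := by
  have : {p : Ultrafilter X | IsFree p} = ⋂ S ∈ (Filter.cofinite : Filter X), {p | S ∈ p} := by
    ext p
    simp [IsFree, Filter.le_def]
  rw [this]
  exact isClosed_biInter fun S _ => ultrafilter_isClosed_basic S

end FreeUltrafilter

section Companion

variable {X : Type*} {G : Subgroup (Equiv.Perm X)}

theorem map_mem_ufOrbit {p r : Ultrafilter X} (hr : r ∈ ufOrbit G p) {h : Equiv.Perm X}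
    (hh : h ∈ G) : r.map h ∈ ufOrbit G p := by
  obtain ⟨g, hg, rfl⟩ := hr
  exact ⟨h * g, G.mul_mem hh hg, Ultrafilter.map_map _ _ _⟩

theorem self_mem_compan {p : Ultrafilter X} {Y : Set X} (hY : Y ∈ p) : p ∈ compan G p Y :=
  ⟨hY, 1, G.one_mem, (Ultrafilter.map_id p).symm⟩

theorem compan_subset_closure_compan {p r : Ultrafilter X} {Y : Set X}
    (hr : r ∈ closure (compan G p Y)) : compan G r Y ⊆ closure (compan G p Y) := by
  rintro _ ⟨hY, h, hh, rfl⟩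
  have hmap : r.map h ∈ closure (Ultrafilter.map h '' compan G p Y) :=
    image_closure_subset_closure_image (Ultrafilter.continuous_map h) ⟨r, hr, rfl⟩
  refine closure_mono ?_ ((ultrafilter_isOpen_basic Y).inter_closure ⟨hY, hmap⟩)
  rintro _ ⟨hY', s, hs, rfl⟩
  exact ⟨hY', map_mem_ufOrbit hs.2 hh⟩

theorem exists_accPt_compan {Y : Set X} (hY : Y.Infinite)
    (h : ∀ p : Ultrafilter X, IsFree p → Y ∈ p → (compan G p Y).Infinite) :
    ∃ q : Ultrafilter X, IsFree q ∧ Y ∈ q ∧ AccPt q (𝓟 (compan G q Y)) := by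
  set S : Set (Ultrafilter X) := {p | IsFree p ∧ Y ∈ p}
  have hS : IsClosed S := isClosed_setOf_isFree.inter (ultrafilter_isClosed_basic Y)
  have hinv : ∀ p ∈ S, compan G p Y ⊆ S := by
    rintro p hp _ ⟨hY, g, -, rfl⟩
    exact ⟨hp.1.map g, hY⟩
  obtain ⟨K, hKS, hK⟩ := exists_minimal_isClosed_invariant (fun p => compan G p Y) hS
    (exists_isFree_mem_of_infinite hY) hinv
  obtain ⟨hKne, hKcl, hKinv⟩ := hK.prop
  obtain ⟨q₀, hq₀⟩ := hKne
  have hKinf : K.Infinite := (h q₀ (hKS hq₀).1 (hKS hq₀).2).mono (hKinv q₀ hq₀)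
  obtain ⟨q, hqK, hacc⟩ := hKinf.exists_accPt_of_subset_isCompact hKcl.isCompact subset_rfl
  have hKq : closure (compan G q Y) = K :=
    hK.eq_of_subset ⟨⟨q, subset_closure (self_mem_compan (hKS hqK).2)⟩, isClosed_closure,
      fun r hr => compan_subset_closure_compan hr⟩ (closure_minimal (hKinv q hqK) hKcl)
  exact ⟨q, (hKS hqK).1, (hKS hqK).2, (hKq ▸ hacc).of_closure⟩

theorem exists_mem_map_notMem_of_accPt {q : Ultrafilter X} {Y : Set X}
    (hq : AccPt q (𝓟 (compan G q Y))) {S : Set X} (hS : S ∈ q) {B : Set (Ultrafilter X)}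
    (hB : B.Finite) : ∃ h ∈ G, S ∈ q.map h ∧ q.map h ∉ B := by
  have hinf := Set.Infinite.of_accPt (hq.nhds_inter ((ultrafilter_isOpen_basic S).mem_nhds hS))
  obtain ⟨_, ⟨hSr, -, h, hh, rfl⟩, hrB⟩ := (hinf.sdiff hB).nonempty
  exact ⟨h, hh, hSr, hrB⟩

end Companion

section Word

variable {M : Type*} [Monoid M]

def fpWord (g : ℕ → M) (ε : ℕ → Bool) (n : ℕ) : M :=
  (List.ofFn fun i : Fin n => g i ^ (if ε i then 1 else 0)).prod

theorem fpWord_succ (g : ℕ → M) (ε : ℕ → Bool) (n : ℕ) :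
    fpWord g ε (n + 1) = fpWord g ε n * g n ^ (if ε n then 1 else 0) := by
  rw [fpWord, List.ofFn_succ', List.prod_concat]
  rfl

theorem fpWord_congr {g g' : ℕ → M} {ε ε' : ℕ → Bool} {n : ℕ} (hg : ∀ i < n, g i = g' i)
    (hε : ∀ i < n, ε i = ε' i) : fpWord g ε n = fpWord g' ε' n := by
  simp only [fpWord, hg _ (Fin.is_lt _), hε _ (Fin.is_lt _)]

theorem fpWord_mem {S : Submonoid M} {g : ℕ → M} (hg : ∀ i, g i ∈ S) (ε : ℕ → Bool) (n : ℕ) :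
    fpWord g ε n ∈ S :=
  S.list_prod_mem <| by
    simp only [List.mem_ofFn, forall_exists_index]
    exact fun _ i h => h ▸ S.pow_mem (hg i) _

theorem finite_range_fpWord (g : ℕ → M) (n : ℕ) : (Set.range fun ε => fpWord g ε n).Finite :=
  (Set.finite_range fun e : Fin n → Bool =>
    (List.ofFn fun i : Fin n => g i ^ (if e i then 1 else 0)).prod).subset <|
      Set.range_subset_iff.2 fun ε => ⟨fun i => ε i, rfl⟩

theorem fpWord_eq_of_prefix {G : Type*} [Group G] (g : ℕ → G) {α β ε ε' : ℕ → Bool} {m n : ℕ}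
    (hmn : m ≤ n) (hε : ∀ i < m, ε i = α i) (hε' : ∀ i < m, ε' i = β i)
    (htail : ∀ i, m ≤ i → ε' i = ε i) :
    fpWord g ε' n = fpWord g β m * (fpWord g α m)⁻¹ * fpWord g ε n := by
  induction n, hmn using Nat.le_induction with
  | base => rw [fpWord_congr (fun _ _ => rfl) hε, fpWord_congr (fun _ _ => rfl) hε',
      inv_mul_cancel_right]
  | succ n hmn ih => rw [fpWord_succ, fpWord_succ, ih, htail n hmn, mul_assoc]

end Word

section Cube

variable {X : Type*}

def fpCube (g : ℕ → Equiv.Perm X) (n : ℕ) (z : X) : Set X :=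
  Set.range fun ε => fpWord g ε n z

theorem fpWord_extend_val {M : Type*} [Monoid M] (g : ℕ → M) (ε : ℕ → Bool) (n : ℕ) :
    fpWord g (Function.extend Fin.val (fun i : Fin n => ε i) fun _ => false) n = fpWord g ε n :=
  fpWord_congr (fun _ _ => rfl) fun i hi => Fin.val_injective.extend_apply _ _ ⟨i, hi⟩

theorem pwBlock_eq_fpCube (g : ℕ → Equiv.Perm X) (x : ℕ → X) (n : ℕ) :
    pwBlock g x n = fpCube g (n + 1) (x n) := by
  ext y
  constructor
  · rintro ⟨e, rfl⟩
    exact ⟨Function.extend Fin.val e fun _ => false, by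
      simp only [fpWord, Fin.val_injective.extend_apply]⟩
  · rintro ⟨ε, rfl⟩
    exact ⟨fun i => ε i, rfl⟩

theorem fpCube_eq_image (g : ℕ → Equiv.Perm X) (n : ℕ) (z : X) :
    fpCube g n z = (· z) '' Set.range fun ε => fpWord g ε n := by
  rw [← Set.range_comp]
  rfl

theorem ncard_fpCube_eq_two_pow_iff (g : ℕ → Equiv.Perm X) (n : ℕ) (z : X) :
    (fpCube g n z).ncard = 2 ^ n ↔
      ∀ ε ε', fpWord g ε n z = fpWord g ε' n z → ∀ i < n, ε i = ε' i := by
  classical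
  set F : (Fin n → Bool) → X := fun e => fpWord g (Function.extend Fin.val e fun _ => false) n z
  have hF : fpCube g n z = ↑(Finset.univ.image F) := by
    rw [Finset.coe_image, Finset.coe_univ, Set.image_univ]
    refine Set.Subset.antisymm ?_ (Set.range_subset_iff.2 fun e => ⟨_, rfl⟩)
    rintro _ ⟨ε, rfl⟩
    exact ⟨fun i => ε i, congrArg (· z) (fpWord_extend_val g ε n)⟩
  have hcard : Fintype.card (Fin n → Bool) = 2 ^ n := by simp
  rw [hF, Set.ncard_coe_finset, ← hcard, ← Finset.card_univ, Finset.card_image_iff,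
    Finset.coe_univ, Set.injOn_univ]
  constructor
  · intro hinj ε ε' h i hi
    have := hinj (a₁ := fun i => ε i) (a₂ := fun i => ε' i) (by
      simp only [F, fpWord_extend_val, h])
    exact congrFun this ⟨i, hi⟩
  · intro h e e' hee'
    funext i
    simpa only [Fin.val_injective.extend_apply] using h _ _ hee' i i.is_lt

end Cube

section Forward

variable {X : Type*} {G : Subgroup (Equiv.Perm X)}

theorem card_le_ncard_compan {ι : Type*} {p : Ultrafilter X} {Y : Set X}
    (hfin : (compan G p Y).Finite) {P : ι → Set X} (hPY : ∀ i, P i ⊆ Y)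
    (hP : Pairwise (Disjoint on P)) {a : ι} (ha : P a ∈ p) {T : ι → Equiv.Perm X}
    (hT : ∀ i, T i ∈ G) (hmaps : ∀ i, Set.MapsTo (T i) (P a) (P i)) :
    Nat.card ι ≤ (compan G p Y).ncard := by
  have hmem : ∀ i, P i ∈ p.map (T i) := fun i =>
    Ultrafilter.mem_map.2 (Filter.mem_of_superset ha (hmaps i).subset_preimage)
  rw [← Set.ncard_univ]
  refine Set.ncard_le_ncard_of_injOn (fun i => p.map (T i))
    (fun i _ => ⟨Filter.mem_of_superset (hmem i) (hPY i), T i, hT i, rfl⟩) ?_ hfin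
  intro i _ j _ hij
  by_contra hne
  have hij : p.map (T i) = p.map (T j) := hij
  obtain ⟨y, hyi, hyj⟩ := Ultrafilter.nonempty_of_mem (Filter.inter_mem (hmem i) (hij ▸ hmem j))
  exact Set.disjoint_left.1 (hP hne) hyi hyj

theorem IsPWShiftedFP.infinite {Y : Set X} (hY : IsPWShiftedFP G Y) : Y.Infinite := by
  obtain ⟨g, x, -, hdisj, hcard, rfl⟩ := hY
  refine Set.infinite_iUnion fun m n hmn => ?_
  by_contra hne
  obtain ⟨y, hy⟩ := Set.nonempty_of_ncard_ne_zero ((hcard m).trans_ne (pow_ne_zero _ two_ne_zero))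
  exact Set.disjoint_left.1 (hdisj m n hne) hy (hmn ▸ hy)

section Piece

variable (g : ℕ → Equiv.Perm X) (x : ℕ → X) (m : ℕ)

theorem fpWord_apply_mem_pwBlock (ε : ℕ → Bool) (n : ℕ) :
    fpWord g ε (n + 1) (x n) ∈ pwBlock g x n := by
  rw [pwBlock_eq_fpCube]
  exact ⟨ε, rfl⟩

def fpPiece (β : ℕ → Bool) : Set X :=
  {y | ∃ n, m ≤ n ∧ ∃ ε, (∀ i < m, ε i = β i) ∧ fpWord g ε (n + 1) (x n) = y}

theorem fpPiece_subset (β : ℕ → Bool) : fpPiece g x m β ⊆ ⋃ n, pwBlock g x n := by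
  rintro _ ⟨n, -, ε, -, rfl⟩
  exact Set.mem_iUnion.2 ⟨n, fpWord_apply_mem_pwBlock g x ε n⟩

theorem mapsTo_fpPiece (α β : ℕ → Bool) :
    Set.MapsTo ⇑(fpWord g β m * (fpWord g α m)⁻¹) (fpPiece g x m α) (fpPiece g x m β) := by
  rintro _ ⟨n, hmn, ε, hε, rfl⟩
  refine ⟨n, hmn, fun i => if i < m then β i else ε i, fun i hi => if_pos hi, ?_⟩
  rw [fpWord_eq_of_prefix g (by omega) hε (fun i hi => if_pos hi)
    (fun i hi => if_neg (not_lt.2 hi))]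
  rfl

theorem disjoint_fpPiece (hdisj : ∀ m n, m ≠ n → Disjoint (pwBlock g x m) (pwBlock g x n))
    (hcard : ∀ n, (pwBlock g x n).ncard = 2 ^ (n + 1)) {β β' : ℕ → Bool}
    (hne : ∃ i < m, β i ≠ β' i) : Disjoint (fpPiece g x m β) (fpPiece g x m β') := by
  refine Set.disjoint_left.2 ?_
  rintro _ ⟨n, hmn, ε, hε, rfl⟩ ⟨n', -, ε', hε', h⟩
  obtain rfl : n' = n := by
    by_contra hnn
    exact Set.disjoint_left.1 (hdisj n' n hnn) (fpWord_apply_mem_pwBlock g x ε' n')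
      (h ▸ fpWord_apply_mem_pwBlock g x ε n)
  obtain ⟨i, hi, hβ⟩ := hne
  have hword := (ncard_fpCube_eq_two_pow_iff _ _ _).1 (pwBlock_eq_fpCube g x n' ▸ hcard n')
  exact hβ (by rw [← hε i hi, ← hε' i hi, hword ε' ε h i (by omega)])

theorem exists_fpPiece_mem {p : Ultrafilter X} (hp : IsFree p) (hYp : ⋃ n, pwBlock g x n ∈ p) :
    ∃ β : Fin m → Bool, fpPiece g x m (Function.extend Fin.val β fun _ => false) ∈ p := by
  have hfar : (⋃ n, pwBlock g x n) \ ⋃ n ∈ Set.Iio m, pwBlock g x n ∈ p :=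
    Filter.sdiff_mem hYp <| Ultrafilter.compl_mem_iff_notMem.2 <| hp.notMem_of_finite <|
      (Set.finite_Iio m).biUnion fun n _ => by
        rw [pwBlock_eq_fpCube, fpCube_eq_image]
        exact (finite_range_fpWord g _).image _
  refine (Ultrafilter.eventually_exists_iff (P := fun β y => y ∈ fpPiece g x m _)).1
    (Filter.mem_of_superset hfar ?_)
  rintro y ⟨hy, hyfar⟩
  obtain ⟨n, hn⟩ := Set.mem_iUnion.1 hy
  rw [pwBlock_eq_fpCube] at hn
  obtain ⟨ε, rfl⟩ := hn
  exact ⟨fun i => ε i, n, not_lt.1 fun hnm => hyfar (Set.mem_biUnion hnm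
    (fpWord_apply_mem_pwBlock g x ε n)), ε,
    fun i hi => (Fin.val_injective.extend_apply (fun j : Fin m => ε j) _ ⟨i, hi⟩).symm, rfl⟩

end Piece

theorem IsPWShiftedFP.infinite_compan {Y : Set X} (hY : IsPWShiftedFP G Y)
    {p : Ultrafilter X} (hp : IsFree p) (hYp : Y ∈ p) : (compan G p Y).Infinite := by
  obtain ⟨g, x, hg, hdisj, hcard, rfl⟩ := hY
  intro hfin
  set m := (compan G p (⋃ n, pwBlock g x n)).ncard
  set E : (Fin m → Bool) → ℕ → Bool := fun β => Function.extend Fin.val β fun _ => false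
  obtain ⟨a, ha⟩ := exists_fpPiece_mem g x m hp hYp
  have hcount := card_le_ncard_compan hfin (fun β => fpPiece_subset g x m (E β))
    (fun β β' hne => disjoint_fpPiece g x m hdisj hcard <| by
      obtain ⟨i, hi⟩ := Function.ne_iff.1 hne
      exact ⟨i, i.is_lt, by simpa only [E, Fin.val_injective.extend_apply] using hi⟩)
    ha (fun β => G.mul_mem (fpWord_mem hg _ _) (G.inv_mem (fpWord_mem hg _ _)))
    (fun β => mapsTo_fpPiece g x m (E a) (E β))
  simp only [Nat.card_eq_fintype_card, Fintype.card_fun, Fintype.card_bool, Fintype.card_fin]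
    at hcount
  exact Nat.lt_two_pow_self.not_ge hcount

end Forward

section Backward

variable {X : Type*} {G : Subgroup (Equiv.Perm X)}

theorem exists_seq_pairwise_disjoint_image {S : ℕ → Set X} (hS : ∀ n, (S n).Infinite)
    {W : ℕ → Set (Equiv.Perm X)} (hW : ∀ n, (W n).Finite) :
    ∃ x : ℕ → X, (∀ n, x n ∈ S n) ∧
      Pairwise (Disjoint on fun n => (· (x n)) '' W n) := by
  let img : ℕ → X → Set X := fun n z => (· z) '' W n
  let P : ℕ → (ℕ → X) → Prop := fun n x =>
    (∀ i < n, x i ∈ S i) ∧ ∀ j < n, ∀ i < j, Disjoint (img i (x i)) (img j (x j))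
  have hP : ∀ n x x', (∀ i < n, x i = x' i) → P n x → P n x' := by
    rintro n x x' h ⟨h₁, h₂⟩
    refine ⟨fun i hi => h i hi ▸ h₁ i hi, fun j hj i hij => ?_⟩
    rw [← h i (hij.trans hj), ← h j hj]
    exact h₂ j hj i hij
  have step : ∀ n x, P n x → ∃ z, P (n + 1) (Function.update x n z) := by
    rintro n x ⟨h₁, h₂⟩
    have hbad : (⋃ i ∈ Set.Iio n, ⋃ w ∈ W n, (⇑w⁻¹) '' img i (x i)).Finite :=
      (Set.finite_Iio n).biUnion fun i _ => (hW n).biUnion fun w _ => ((hW i).image _).image _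
    obtain ⟨z, hzS, hzbad⟩ := ((hS n).sdiff hbad).nonempty
    refine ⟨z, fun i hi => ?_, fun j hj i hij => ?_⟩
    · rcases Nat.lt_succ_iff_lt_or_eq.1 hi with hi | rfl
      · rw [Function.update_of_ne hi.ne]; exact h₁ i hi
      · rwa [Function.update_self]
    rw [Function.update_of_ne (hij.trans_le (Nat.lt_succ_iff.1 hj)).ne]
    rcases Nat.lt_succ_iff_lt_or_eq.1 hj with hj | rfl
    · rw [Function.update_of_ne hj.ne]; exact h₂ j hj i hij
    rw [Function.update_self]
    refine Set.disjoint_left.2 ?_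
    rintro _ hy ⟨w, hw, rfl⟩
    exact hzbad (Set.mem_biUnion hij (Set.mem_biUnion hw ⟨_, hy, by simp⟩))
  obtain ⟨x, hx⟩ := exists_seq_of_forall_exists_update P hP (f₀ := fun _ => (hS 0).nonempty.some)
    ⟨fun i hi => absurd hi (Nat.not_lt_zero i), fun j hj => absurd hj (Nat.not_lt_zero j)⟩ step
  refine ⟨x, fun n => (hx (n + 1)).1 n n.lt_succ_self, fun m n hmn => ?_⟩
  rcases hmn.lt_or_gt with h | h
  · exact (hx (n + 1)).2 n n.lt_succ_self m h
  · exact ((hx (m + 1)).2 m m.lt_succ_self n h).symm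

def fpBases (Y : Set X) (g : ℕ → Equiv.Perm X) (n : ℕ) : Set X :=
  {z | fpCube g n z ⊆ Y ∧ ∀ ε ε', fpWord g ε n z = fpWord g ε' n z → ∀ i < n, ε i = ε' i}

theorem subset_fpBases_zero (Y : Set X) (g : ℕ → Equiv.Perm X) : Y ⊆ fpBases Y g 0 := by
  rintro z hz
  exact ⟨by rintro _ ⟨ε, rfl⟩; exact hz, fun _ _ _ i hi => absurd hi (Nat.not_lt_zero i)⟩

theorem fpBases_congr (Y : Set X) {g g' : ℕ → Equiv.Perm X} {n : ℕ} (h : ∀ i < n, g i = g' i) :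
    fpBases Y g n = fpBases Y g' n := by
  simp only [fpBases, fpCube, fpWord_congr h fun _ _ => rfl]

theorem fpWord_update_succ (g : ℕ → Equiv.Perm X) (ε : ℕ → Bool) (n : ℕ) (a : Equiv.Perm X)
    (z : X) :
    fpWord (Function.update g n a) ε (n + 1) z = fpWord g ε n (if ε n then a z else z) := by
  rw [fpWord_succ, Function.update_self,
    fpWord_congr (fun i hi => Function.update_of_ne hi.ne _ _) fun _ _ => rfl]
  cases ε n <;> rfl

theorem mem_fpBases_update_succ {Y : Set X} {g : ℕ → Equiv.Perm X} {n : ℕ} {a : Equiv.Perm X}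
    {z : X} (hz : z ∈ fpBases Y g n) (haz : a z ∈ fpBases Y g n)
    (hsep : ∀ ε ε', a z ≠ (fpWord g ε n)⁻¹ (fpWord g ε' n z)) :
    z ∈ fpBases Y (Function.update g n a) (n + 1) := by
  have hu : ∀ b : Bool, (if b then a z else z) ∈ fpBases Y g n := fun b => by
    cases b
    exacts [hz, haz]
  refine ⟨?_, fun ε ε' h => ?_⟩
  · rintro _ ⟨ε, rfl⟩
    simp only [fpWord_update_succ]
    exact (hu _).1 ⟨ε, rfl⟩
  rw [fpWord_update_succ, fpWord_update_succ] at h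
  have hlast : ∀ ε ε', fpWord g ε n (if ε n then a z else z) =
      fpWord g ε' n (if ε' n then a z else z) → ε n → ε' n := by
    intro ε ε' h hε
    by_contra hε'
    rw [if_pos hε, if_neg hε'] at h
    exact hsep ε ε' (by rw [← h, Equiv.Perm.inv_def, Equiv.symm_apply_apply])
  have hn : ε n = ε' n := Bool.eq_iff_iff.2 ⟨hlast ε ε' h, hlast ε' ε h.symm⟩
  rw [hn] at h
  intro i hi
  rcases Nat.lt_succ_iff_lt_or_eq.1 hi with hi | rfl
  · exact (hu _).2 ε ε' h i hi
  · exact hn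

theorem exists_fpBases_update_succ_mem {Y : Set X} {q : Ultrafilter X}
    (hq : AccPt q (𝓟 (compan G q Y))) {g : ℕ → Equiv.Perm X} {n : ℕ} (hg : fpBases Y g n ∈ q) :
    ∃ a ∈ G, fpBases Y (Function.update g n a) (n + 1) ∈ q := by
  set W := Set.range fun ε => fpWord g ε n
  have hW : W.Finite := finite_range_fpWord g n
  -- `a q` avoids every `u⁻¹ v q`, so the new cube points `u (a z)` differ from the old ones `v z`.
  obtain ⟨a, ha, haD, haB⟩ := exists_mem_map_notMem_of_accPt hq hg
    ((hW.prod hW).image fun uv : Equiv.Perm X × Equiv.Perm X => q.map ⇑(uv.1⁻¹ * uv.2))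
  have hsep : ∀ u ∈ W, ∀ v ∈ W, {z | a z ≠ (u⁻¹ * v) z} ∈ q := fun u hu v hv =>
    Ultrafilter.eventually_ne_of_map_ne fun h => haB ⟨(u, v), ⟨hu, hv⟩, h.symm⟩
  refine ⟨a, ha, Filter.mem_of_superset (Filter.inter_mem (Filter.inter_mem hg haD)
    ((Filter.biInter_mem hW).2 fun u hu => (Filter.biInter_mem hW).2 (hsep u hu))) ?_⟩
  rintro z ⟨⟨hz, haz⟩, hsepz⟩
  refine mem_fpBases_update_succ hz haz fun ε ε' => ?_
  exact Set.mem_iInter₂.1 (Set.mem_iInter₂.1 hsepz _ ⟨ε, rfl⟩) _ ⟨ε', rfl⟩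

theorem exists_seq_fpBases_mem {Y : Set X} {q : Ultrafilter X} (hYq : Y ∈ q)
    (hq : AccPt q (𝓟 (compan G q Y))) :
    ∃ g : ℕ → Equiv.Perm X, (∀ n, g n ∈ G) ∧ ∀ n, fpBases Y g n ∈ q := by
  obtain ⟨g, hg⟩ := exists_seq_of_forall_exists_update
    (fun n g => (∀ i < n, g i ∈ G) ∧ fpBases Y g n ∈ q)
    (fun n g g' h ⟨h₁, h₂⟩ => ⟨fun i hi => h i hi ▸ h₁ i hi, fpBases_congr Y h ▸ h₂⟩)
    (f₀ := fun _ => 1) ⟨fun i hi => absurd hi (Nat.not_lt_zero i),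
      Filter.mem_of_superset hYq (subset_fpBases_zero Y _)⟩
    (fun n g ⟨h₁, h₂⟩ => by
      obtain ⟨a, ha, haq⟩ := exists_fpBases_update_succ_mem hq h₂
      refine ⟨a, fun i hi => ?_, haq⟩
      rcases Nat.lt_succ_iff_lt_or_eq.1 hi with hi | rfl
      · rw [Function.update_of_ne hi.ne]; exact h₁ i hi
      · rwa [Function.update_self])
  exact ⟨g, fun n => (hg (n + 1)).1 n n.lt_succ_self, fun n => (hg n).2⟩

theorem exists_isPWShiftedFP_subset {Y : Set X} {q : Ultrafilter X} (hqfree : IsFree q)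
    (hYq : Y ∈ q) (hq : AccPt q (𝓟 (compan G q Y))) : ∃ Z ⊆ Y, IsPWShiftedFP G Z := by
  obtain ⟨g, hg, hbases⟩ := exists_seq_fpBases_mem hYq hq
  obtain ⟨x, hx, hdisj⟩ := exists_seq_pairwise_disjoint_image
    (fun n => hqfree.infinite_of_mem (hbases (n + 1))) fun n => finite_range_fpWord g (n + 1)
  refine ⟨⋃ n, pwBlock g x n, Set.iUnion_subset fun n => ?_, g, x, hg, fun m n hmn => ?_,
    fun n => ?_, rfl⟩
  · exact pwBlock_eq_fpCube g x n ▸ (hx n).1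
  · simpa only [pwBlock_eq_fpCube, fpCube_eq_image] using hdisj hmn
  · rw [pwBlock_eq_fpCube, ncard_fpCube_eq_two_pow_iff]
    exact (hx n).2

end Backward

theorem scattered_iff_no_pwFP_general {X : Type*}
    (G : Subgroup (Equiv.Perm X)) (A : Set X) :
    IsScattered G A ↔ ∀ Y ⊆ A, ¬ IsPWShiftedFP G Y := by
  constructor
  · intro hA Y hYA hY
    obtain ⟨p, hp, hYp, hfin⟩ := hA Y hYA hY.infinite
    exact hY.infinite_compan hp hYp hfin
  · intro hA Y hYA hYinf
    by_contra hY
    push Not at hY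
    obtain ⟨q, hq, hYq, hacc⟩ := exists_accPt_compan hYinf hY
    obtain ⟨Z, hZY, hZ⟩ := exists_isPWShiftedFP_subset hq hYq hacc
    exact hA Z (hZY.trans hYA) hZ

/-- A subset `A` of `X_G` is scattered iff `A` contains no piece-wise
shifted FP-set. -/
theorem scattered_iff_no_pwFP {X : Type*} [Infinite X]
    (G : Subgroup (Equiv.Perm X)) (A : Set X) :
    IsScattered G A ↔ ∀ Y ⊆ A, ¬ IsPWShiftedFP G Y :=
  scattered_iff_no_pwFP_general G A
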